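/- arXiv:0909.4172 — 4 statements merged into one kernel-verified Lean document; each statement's English description precedes it below -/
import Mathlib

section
/- Let r > 0 and let C, O, A, B be points in the Euclidean plane such that dist C O = 2r, dist C A = 2r, dist A O = 2·√3·r, dist C B = 4r, the points A, O, B are collinear, and O lies strictly between A and B (i.e., O ∈ segment ℝ A B, O ≠ A, O ≠ B). Then dist A B / dist A O = φ and dist A O / dist O B = φ, where φ = (1+√5)/2 is the golden ratio. (That is, the vertex O of the hexagonal cluster is the golden-section point of the segment A B obtained from a tangent of the inner circle of radius r crossing the middle circle of radius 2r at A and the outer circle of radius 4r at B.) -/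
/-!
The vertex `O` and the point `A` lie on the middle circle, so the power of the point `B` with
respect to it gives `BO · BA = BC² - (2r)² = 12 r² = AO²`. Writing `BA = AO + OB`, this says
`(AO + OB) · OB = AO²`, which is exactly the defining proportion of the golden section.
-/

open EuclideanGeometry
open scoped goldenRatio

namespace Real

theorem eq_goldenRatio_of_sq_eq_add_one {q : ℝ} (hq : 0 ≤ q) (h : q ^ 2 = q + 1) : q = φ := by
  have hfactor : (q - φ) * (q - ψ) = 0 := by
    linear_combination h - q * goldenRatio_add_goldenConj + goldenRatio_mul_goldenConj
  have hψ : q - ψ ≠ 0 := by linarith [goldenConj_neg]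
  exact sub_eq_zero.1 ((mul_eq_zero.1 hfactor).resolve_right hψ)

theorem div_eq_goldenRatio_of_add_mul_eq_sq {a x : ℝ} (ha : 0 < a) (hx : 0 ≤ x)
    (h : (a + x) * x = a ^ 2) : (a + x) / a = φ ∧ a / x = φ := by
  have hx_pos : 0 < x := hx.lt_of_ne <| by rintro rfl; nlinarith
  have hratio : (a + x) / a = a / x := by
    rw [div_eq_div_iff ha.ne' hx_pos.ne']
    linear_combination h
  have hgolden : a / x = φ := by
    refine eq_goldenRatio_of_sq_eq_add_one (by positivity) ?_
    rw [div_pow, ← h]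
    field_simp
  exact ⟨hratio.trans hgolden, hgolden⟩

end Real

variable {V P : Type*} [NormedAddCommGroup V] [InnerProductSpace ℝ V] [MetricSpace P]
  [NormedAddTorsor V P]

theorem EuclideanGeometry.Sphere.div_dist_eq_goldenRatio_of_power_eq_sq_dist {s : Sphere P}
    {a o b : P} (ha : a ∈ s) (ho : o ∈ s) (hao : a ≠ o) (hwbtw : Wbtw ℝ a o b)
    (hpow : s.power b = dist a o ^ 2) :
    dist a b / dist a o = φ ∧ dist a o / dist o b = φ := by
  have hradius : 0 ≤ s.radius := mem_sphere.1 ha ▸ dist_nonneg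
  have hb : b ∈ line[ℝ, a, o] :=
    hwbtw.collinear.mem_affineSpan_of_mem_of_ne (by simp) (by simp) (by simp) hao
  have hb_outside : s.radius ≤ dist b s.center :=
    (power_nonneg_iff_radius_le_dist_center hradius).1 (hpow ▸ sq_nonneg _)
  have hsecant := s.mul_dist_eq_power_of_radius_le_dist_center hradius hb ha ho hb_outside
  rw [dist_comm b a, dist_comm b o, ← hwbtw.dist_add_dist] at hsecant
  rw [← hwbtw.dist_add_dist]
  refine Real.div_eq_goldenRatio_of_add_mul_eq_sq (dist_pos.2 hao) dist_nonneg ?_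
  linear_combination hsecant + hpow

theorem phi_center_of_hexagonal_cluster_general
    (r : ℝ) (hr : 0 < r)
    (C O A B : EuclideanSpace ℝ (Fin 2))
    (hCO : dist C O = 2 * r)
    (hCA : dist C A = 2 * r)
    (hAO : dist A O = 2 * Real.sqrt 3 * r)
    (hCB : dist C B = 4 * r)
    (hseg : O ∈ segment ℝ A B) :
    dist A B / dist A O = (1 + Real.sqrt 5) / 2 ∧
    dist A O / dist O B = (1 + Real.sqrt 5) / 2 := by
  let s : Sphere (EuclideanSpace ℝ (Fin 2)) := ⟨C, 2 * r⟩
  have hA : A ∈ s := mem_sphere.2 (by rw [dist_comm]; exact hCA)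
  have hO : O ∈ s := mem_sphere.2 (by rw [dist_comm]; exact hCO)
  have hAO_ne : A ≠ O := dist_pos.1 (hAO ▸ by positivity)
  have hpow : s.power B = dist A O ^ 2 := by
    rw [Sphere.power, dist_comm, hCB, hAO]
    linear_combination (-4 * r ^ 2) * Real.sq_sqrt (show (0 : ℝ) ≤ 3 by norm_num)
  exact s.div_dist_eq_goldenRatio_of_power_eq_sq_dist hA hO hAO_ne (mem_segment_iff_wbtw.1 hseg) hpow

theorem phi_center_of_hexagonal_cluster
    (r : ℝ) (hr : 0 < r)
    (C O A B : EuclideanSpace ℝ (Fin 2))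
    (hCO : dist C O = 2 * r)
    (hCA : dist C A = 2 * r)
    (hAO : dist A O = 2 * Real.sqrt 3 * r)
    (hCB : dist C B = 4 * r)
    (hcol : Collinear ℝ ({A, O, B} : Set (EuclideanSpace ℝ (Fin 2))))
    (hseg : O ∈ segment ℝ A B) (hOA : O ≠ A) (hOB : O ≠ B) :
    dist A B / dist A O = (1 + Real.sqrt 5) / 2 ∧
    dist A O / dist O B = (1 + Real.sqrt 5) / 2 :=
  phi_center_of_hexagonal_cluster_general r hr C O A B hCO hCA hAO hCB hseg
end

section
/- Let r > 0 and let C, O, A, B be points in the Euclidean plane such that dist C O = 2r, dist C A = 2r, dist A O = 2·√3·r, dist C B = 4r, the points A, O, B are collinear, and O lies strictly between A and B. Then (dist A O)^2 = (dist A B) · (dist O B); that is, O divides the segment A B in extreme and mean ratio: the ratio of the whole segment to its longer part equals the ratio of the longer part to the shorter part. -/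
theorem extreme_and_mean_ratio_of_hexagonal_cluster
    (r : ℝ) (hr : 0 < r)
    (C O A B : EuclideanSpace ℝ (Fin 2))
    (hCO : dist C O = 2 * r)
    (hCA : dist C A = 2 * r)
    (hAO : dist A O = 2 * Real.sqrt 3 * r)
    (hCB : dist C B = 4 * r)
    (hcol : Collinear ℝ ({A, O, B} : Set (EuclideanSpace ℝ (Fin 2))))
    (hseg : O ∈ segment ℝ A B) (hOA : O ≠ A) (hOB : O ≠ B) :
    (dist A O) ^ 2 = dist A B * dist O B := by
  have hsbtw : Sbtw ℝ A O B := ⟨(mem_segment_iff_wbtw).mp hseg, hOA, hOB⟩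
  have hangle : EuclideanGeometry.angle A O B = Real.pi := hsbtw.angle₁₂₃_eq_pi
  have hstewart := EuclideanGeometry.dist_sq_mul_dist_add_dist_sq_mul_dist C A B O hangle
  have hadd : dist A B = dist A O + dist O B :=
    by simpa [dist_comm B O] using EuclideanGeometry.dist_eq_add_dist_of_angle_eq_pi hangle
  have hs3 : Real.sqrt 3 ^ 2 = 3 := Real.sq_sqrt (by norm_num)
  have ha : 0 < dist A O := by
    rw [hAO]; positivity
  rw [dist_comm B O] at hstewart
  rw [hCA, hCB, hCO, hadd] at hstewart
  rw [hadd]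
  rw [hAO] at hstewart ha ⊢
  have key : 2 * Real.sqrt 3 * r * ((2 * Real.sqrt 3 * r) ^ 2) =
      2 * Real.sqrt 3 * r * ((2 * Real.sqrt 3 * r + dist O B) * dist O B) := by
    linear_combination hstewart + 8 * Real.sqrt 3 * r ^ 3 * hs3
  exact mul_left_cancel₀ (ne_of_gt ha) key
end

section
/- Let r > 0, let C be a point in the Euclidean plane, and let A, P, Q, B be collinear points with dist C A = 4r, dist C B = 4r, dist C P = 2r, dist C Q = 2r, dist P Q = 2·√3·r, arranged so that P ∈ segment ℝ A Q and Q ∈ segment ℝ P B, with P ≠ Q. Then dist A Q / dist P Q = φ and dist P Q / dist A P = φ, where φ = (1+√5)/2 is the golden ratio. (A line tangent to the inner circle of three concentric circles of radii r, 2r, 4r is cut by the two outer circles into segments in golden ratio.) -/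
open EuclideanGeometry Real

theorem tangent_line_cut_in_golden_ratio
    (r : ℝ) (hr : 0 < r)
    (C A P Q B : EuclideanSpace ℝ (Fin 2))
    (hcol : Collinear ℝ ({A, P, Q, B} : Set (EuclideanSpace ℝ (Fin 2))))
    (hCA : dist C A = 4 * r)
    (hCB : dist C B = 4 * r)
    (hCP : dist C P = 2 * r)
    (hCQ : dist C Q = 2 * r)
    (hPQ : dist P Q = 2 * Real.sqrt 3 * r)
    (hP : P ∈ segment ℝ A Q)
    (hQ : Q ∈ segment ℝ P B)
    (hPQne : P ≠ Q) :
    dist A Q / dist P Q = (1 + Real.sqrt 5) / 2 ∧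
    dist P Q / dist A P = (1 + Real.sqrt 5) / 2 := by
  have s3 : (0:ℝ) < Real.sqrt 3 := Real.sqrt_pos.2 (by norm_num)
  have s5 : (0:ℝ) < Real.sqrt 5 := Real.sqrt_pos.2 (by norm_num)
  have s15 : (0:ℝ) < Real.sqrt 15 := Real.sqrt_pos.2 (by norm_num)
  have h3 : Real.sqrt 3 ^ 2 = 3 := Real.sq_sqrt (by norm_num)
  have h5 : Real.sqrt 5 ^ 2 = 5 := Real.sq_sqrt (by norm_num)
  have h15 : Real.sqrt 15 ^ 2 = 15 := Real.sq_sqrt (by norm_num)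
  have h35 : Real.sqrt 15 = Real.sqrt 3 * Real.sqrt 5 := by
    rw [← Real.sqrt_mul (by norm_num : (0:ℝ) ≤ 3)]; norm_num
  have hPA : P ≠ A := by
    intro h; rw [h] at hCP; rw [hCP] at hCA; nlinarith
  have hsbtw : Sbtw ℝ A P Q := ⟨mem_segment_iff_wbtw.1 hP, hPA, hPQne⟩
  have hangle : ∠ A P Q = π := EuclideanGeometry.angle_eq_pi_iff_sbtw.2 hsbtw
  have hstewart := EuclideanGeometry.dist_sq_mul_dist_add_dist_sq_mul_dist C A Q P hangle
  have hsum : dist A P + dist P Q = dist A Q := dist_add_dist_of_mem_segment hP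
  set x := dist A P with hx
  have hxpos : 0 < x := dist_pos.2 hPA.symm
  rw [dist_comm Q P] at hstewart
  rw [hCA, hCQ, hCP, hPQ, ← hsum, hPQ] at hstewart
  have hT : 2 * Real.sqrt 3 * r * (x ^ 2 + 2 * Real.sqrt 3 * r * x - 12 * r ^ 2) = 0 := by
    linear_combination -hstewart
  have hT2 : x ^ 2 + 2 * Real.sqrt 3 * r * x - 12 * r ^ 2 = 0 := by
    have := mul_eq_zero.1 hT
    rcases this with h | h
    · exact absurd h (by positivity)
    · exact h
  have hquad : (x - (Real.sqrt 15 - Real.sqrt 3) * r) * (x + (Real.sqrt 15 + Real.sqrt 3) * r) = 0 := by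
    linear_combination hT2 - r ^ 2 * h15 + r ^ 2 * h3
  have hfac2 : 0 < x + (Real.sqrt 15 + Real.sqrt 3) * r := by positivity
  have hxval : x = (Real.sqrt 15 - Real.sqrt 3) * r := by
    rcases mul_eq_zero.1 hquad with h | h
    · linarith
    · linarith
  have hAQ : dist A Q = (Real.sqrt 15 + Real.sqrt 3) * r := by
    rw [← hsum, hxval, hPQ]; ring
  constructor
  · rw [hAQ, hPQ, div_eq_div_iff (by positivity) (by norm_num : (2:ℝ) ≠ 0)]
    linear_combination 2 * r * h35
  · rw [hPQ]
    have hd : (0:ℝ) < (Real.sqrt 15 - Real.sqrt 3) * r := by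
      have : Real.sqrt 3 < Real.sqrt 15 := by
        apply Real.sqrt_lt_sqrt <;> norm_num
      nlinarith
    rw [hxval, div_eq_div_iff hd.ne' (by norm_num : (2:ℝ) ≠ 0)]
    linear_combination (-(r * (1 + Real.sqrt 5))) * h35 - r * Real.sqrt 3 * h5
end

section
/- Let r > 0 and let O, C be points in the Euclidean plane with dist O C = 2r. Then there exist points A and B such that dist C A = 2r, dist C B = 4r, dist A O = 2·√3·r, O lies strictly between A and B (O ∈ segment ℝ A B, O ≠ A, O ≠ B), and consequently dist A B / dist A O = φ and dist A O / dist O B = φ, where φ = (1+√5)/2. (Hence every vertex of a regular hexagonal tessellation, being at distance 2r from the center of each adjacent hexagon of circumradius 2r, is a Phi center: it is the golden-section division point of such a segment A B.) -/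
/-!
Let `d` be a unit vector making the angle `π/6` with `O - C`, so that the line through `O` in
direction `d` is tangent to the circle of radius `2r · sin (π/6) = r` about `C`. The points of
this line are `O + t • d` with `dist C (O + t • d) ^ 2 = 4r² + 2√3 r t + t²`. Taking `a = 2√3 r`,
the point `A = O - a • d` lies on the circle of radius `2r`, and `B = O + (a / φ) • d`, written
with `1 / φ = φ - 1`, lies on the circle of radius `4r` because `1 / φ + 1 / φ² = 1`.
Then `AO / OB = φ` and `AB / AO = 1 + 1 / φ = φ`.
-/

open Module RealInnerProductSpace Real goldenRatio EuclideanSpace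

variable {V : Type*} [NormedAddCommGroup V] [InnerProductSpace ℝ V]

theorem Orientation.inner_rotation_right_self [Fact (finrank ℝ V = 2)]
    (o : Orientation ℝ V (Fin 2)) (θ : Real.Angle) (x : V) :
    ⟪x, o.rotation θ x⟫ = θ.cos * ‖x‖ ^ 2 := by
  rw [o.rotation_apply, inner_add_right, real_inner_smul_right, real_inner_smul_right,
    o.inner_rightAngleRotation_right, o.areaForm_apply_self, real_inner_self_eq_norm_sq]
  ring

theorem exists_norm_eq_one_inner_eq_norm_mul_cos [Fact (finrank ℝ V = 2)] (x : V) (θ : ℝ) :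
    ∃ d : V, ‖d‖ = 1 ∧ ⟪x, d⟫ = ‖x‖ * cos θ := by
  have := FiniteDimensional.of_fact_finrank_eq_two (K := ℝ) (V := V)
  obtain rfl | hx := eq_or_ne x 0
  · have : Nontrivial V := Module.nontrivial_of_finrank_eq_succ (Fact.out : finrank ℝ V = 2)
    obtain ⟨d, hd⟩ := exists_norm_eq V zero_le_one
    exact ⟨d, hd, by simp⟩
  let o : Orientation ℝ V (Fin 2) := (finBasisOfFinrankEq ℝ V Fact.out).orientation
  have hx' : ‖x‖ ≠ 0 := norm_ne_zero_iff.2 hx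
  refine ⟨o.rotation θ (‖x‖⁻¹ • x), ?_, ?_⟩
  · rw [LinearIsometryEquiv.norm_map, norm_smul, norm_inv, norm_norm, inv_mul_cancel₀ hx']
  · rw [map_smul, real_inner_smul_right, o.inner_rotation_right_self, Real.Angle.cos_coe]
    field_simp

theorem dist_add_smul_sq {d : V} (hd : ‖d‖ = 1) (C O : V) (t : ℝ) :
    dist C (O + t • d) ^ 2 = dist O C ^ 2 + 2 * t * ⟪O - C, d⟫ + t ^ 2 := by
  rw [dist_comm, dist_eq_norm, dist_eq_norm, add_sub_right_comm, norm_add_sq_real,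
    real_inner_smul_right, norm_smul, hd, Real.norm_eq_abs, mul_one, sq_abs]
  ring

theorem mem_segment_add_smul_add_smul (x d : V) {s t : ℝ} (hs : s ≤ 0) (ht : 0 ≤ t) :
    x ∈ segment ℝ (x + s • d) (x + t • d) := by
  rw [mem_segment_iff_sameRay, sub_add_cancel_left, add_sub_cancel_left, ← neg_smul]
  exact (SameRay.sameRay_nonneg_smul_left d (neg_nonneg.2 hs)).nonneg_smul_right ht

theorem dist_add_smul_add_smul {d : V} (hd : ‖d‖ = 1) (x : V) (s t : ℝ) :
    dist (x + s • d) (x + t • d) = |s - t| := by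
  rw [dist_add_left, dist_eq_norm, ← sub_smul, norm_smul, hd, mul_one, Real.norm_eq_abs]

theorem goldenRatio_mul_goldenRatio_sub_one : φ * (φ - 1) = 1 := by
  linear_combination goldenRatio_sq

theorem golden_section_add_smul {d : V} (hd : ‖d‖ = 1) (x : V) {a : ℝ} (ha : 0 < a) :
    dist (x + (-a) • d) x = a ∧
      x ∈ segment ℝ (x + (-a) • d) (x + (a * (φ - 1)) • d) ∧
      x ≠ x + (-a) • d ∧ x ≠ x + (a * (φ - 1)) • d ∧
      dist (x + (-a) • d) (x + (a * (φ - 1)) • d) / dist (x + (-a) • d) x = φ ∧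
      dist (x + (-a) • d) x / dist x (x + (a * (φ - 1)) • d) = φ := by
  have hφ : 0 < φ - 1 := sub_pos.2 one_lt_goldenRatio
  have hAx : dist (x + (-a) • d) x = a := by
    rw [dist_self_add_left, norm_smul, hd, mul_one, norm_neg, Real.norm_of_nonneg ha.le]
  have hxB : dist x (x + (a * (φ - 1)) • d) = a * (φ - 1) := by
    rw [dist_self_add_right, norm_smul, hd, mul_one, Real.norm_of_nonneg (by positivity)]
  have hAB : dist (x + (-a) • d) (x + (a * (φ - 1)) • d) = a * φ := by
    rw [dist_add_smul_add_smul hd, abs_of_neg (by nlinarith)]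
    ring
  refine ⟨hAx, mem_segment_add_smul_add_smul x d (by linarith) (by positivity),
    fun h => ?_, fun h => ?_, ?_, ?_⟩
  · rw [← h, dist_self] at hAx
    exact ha.ne hAx
  · rw [← h, dist_self] at hxB
    exact (mul_pos ha hφ).ne hxB
  · rw [hAB, hAx, mul_div_cancel_left₀ _ ha.ne']
  · rw [hAx, hxB, div_mul_cancel_left₀ ha.ne',
      inv_eq_of_mul_eq_one_left goldenRatio_mul_goldenRatio_sub_one]

theorem hexagonal_tessellation_vertex_is_phi_center
    (r : ℝ) (hr : 0 < r)
    (O C : EuclideanSpace ℝ (Fin 2))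
    (hOC : dist O C = 2 * r) :
    ∃ A B : EuclideanSpace ℝ (Fin 2),
      dist C A = 2 * r ∧
      dist C B = 4 * r ∧
      dist A O = 2 * Real.sqrt 3 * r ∧
      O ∈ segment ℝ A B ∧ O ≠ A ∧ O ≠ B ∧
      dist A B / dist A O = (1 + Real.sqrt 5) / 2 ∧
      dist A O / dist O B = (1 + Real.sqrt 5) / 2 := by
  obtain ⟨d, hd, hdOC⟩ := exists_norm_eq_one_inner_eq_norm_mul_cos (O - C) (π / 6)
  rw [← dist_eq_norm, hOC, cos_pi_div_six] at hdOC
  set a := 2 * √3 * r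
  have h3 : √3 ^ 2 = 3 := Real.sq_sqrt (by norm_num)
  have hCA : dist C (O + (-a) • d) = 2 * r := by
    rw [← sq_eq_sq₀ dist_nonneg (by positivity), dist_add_smul_sq hd, hOC, hdOC]
    ring
  have hCB : dist C (O + (a * (φ - 1)) • d) = 4 * r := by
    rw [← sq_eq_sq₀ dist_nonneg (by positivity), dist_add_smul_sq hd, hOC, hdOC]
    linear_combination (12 * r ^ 2) * goldenRatio_sq + (4 * r ^ 2 * ((φ - 1) + (φ - 1) ^ 2)) * h3
  exact ⟨_, _, hCA, hCB, golden_section_add_smul hd O (by positivity)⟩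
end
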